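/- For all k ≥ 1, the number of perfectly matchable sets of the cycle C_{2k} (i.e., p(C_{2k}; 1)) equals ⌊φ^{2k}⌋, where φ = (1+√5)/2 is the golden ratio. -/

import Mathlib

open Polynomial

variable {V : Type*}

/-- `M` (a finite set of edges) is a matching of the graph `G`:
its members are edges of `G` and no two distinct members share an endpoint. -/
def IsGraphMatching (G : SimpleGraph V) (M : Finset (Sym2 V)) : Prop :=
  (M : Set (Sym2 V)) ⊆ G.edgeSet ∧
    ∀ e ∈ M, ∀ f ∈ M, e ≠ f → ∀ x, x ∈ e → x ∉ f

/-- The set of vertices covered by the edge set `M` is exactly `S`. -/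
def Covers (M : Finset (Sym2 V)) (S : Finset V) : Prop :=
  ∀ x, x ∈ S ↔ ∃ e ∈ M, x ∈ e

/-- `M` is a perfect matching of the induced subgraph `G[S]`. -/
def IsPerfectMatchingOn (G : SimpleGraph V) (M : Finset (Sym2 V)) (S : Finset V) : Prop :=
  IsGraphMatching G M ∧ Covers M S

/-- `S` is a perfectly matchable set of `G`. -/
def IsPMS (G : SimpleGraph V) (S : Finset V) : Prop :=
  ∃ M, IsPerfectMatchingOn G M S

open Classical in
/-- The perfectly matchable set polynomial of the subgraph of `G` induced on the
ground vertex set `A`: the generating function `∑ p_{2k} z^k` where `p_{2k}` is the number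
of perfectly matchable sets `S ⊆ A` with `|S| = 2k`. -/
noncomputable def pmPoly [Fintype V] (G : SimpleGraph V) (A : Finset V) : Polynomial ℤ :=
  ∑ S ∈ A.powerset, if IsPMS G S then X ^ (S.card / 2) else 0

/-- `G` has no cycle of even length. -/
def NoEvenCycle (G : SimpleGraph V) : Prop :=
  ∀ (v : V) (c : G.Walk v v), c.IsCycle → ¬ Even c.length

/-!
A set `T ⊆ ℤ/n` without two cyclically consecutive elements gives the matching of `C_n` with edges
`{i, i + 1}`, `i ∈ T`, every matching arises this way, and there are `L_n = F_{n+1} + F_{n-1}` such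
sets. The set `T` is recovered from the vertex set `T ∪ (T + 1)` it covers by walking around the
cycle from an uncovered vertex, unless every vertex is covered; for even `n` the whole cycle is
covered by exactly the two alternating sets. Hence `C_n` has `L_n - 1` perfectly matchable sets,
and `L_n - 1 = ⌊φ^n⌋` because `L_n = φ^n + ψ^n` with `0 < ψ^n < 1`.
-/

open Finset

/-- On `Fin n` the addition wraps around, so there this forbids cyclically consecutive elements. -/
def NoConsecutive {α : Type*} [Add α] [One α] (T : Finset α) : Prop := ∀ i ∈ T, i + 1 ∉ T

instance {α : Type*} [Add α] [One α] [DecidableEq α] : DecidablePred (NoConsecutive (α := α)) :=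
  fun T => inferInstanceAs (Decidable (∀ i ∈ T, i + 1 ∉ T))

section Powerset

variable {α : Type*} [DecidableEq α] (P : Finset α → Prop) [DecidablePred P]

lemma card_filter_powerset_insert {s : Finset α} {a : α} (ha : a ∉ s) :
    #{t ∈ (insert a s).powerset | P t} =
      #{t ∈ s.powerset | P t} + #{t ∈ s.powerset | P (insert a t)} := by
  simp only [card_filter]
  exact sum_powerset_insert ha _

lemma card_filter_powerset_and_notMem (s : Finset α) (a : α) :
    #{t ∈ s.powerset | P t ∧ a ∉ t} = #{t ∈ (s.erase a).powerset | P t} := by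
  congr 1
  ext t
  simp only [mem_filter, mem_powerset, subset_erase]
  tauto

end Powerset

lemma noConsecutive_insert_iff_of_forall_lt {a : ℕ} {T : Finset ℕ} (h : ∀ i ∈ T, a < i) :
    NoConsecutive (insert a T) ↔ NoConsecutive T ∧ a + 1 ∉ T := by
  refine ⟨fun hT => ⟨fun i hi => ?_, ?_⟩, fun ⟨hT, ha⟩ i hi => ?_⟩
  · exact fun hi1 => hT i (mem_insert_of_mem hi) (mem_insert_of_mem hi1)
  · exact fun ha => hT a (mem_insert_self a T) (mem_insert_of_mem ha)
  · rcases mem_insert.1 hi with rfl | hi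
    · simpa [mem_insert] using ha
    · have := h i hi
      simpa [mem_insert, show i + 1 ≠ a by omega] using hT i hi

theorem card_noConsecutive_Ico (a b : ℕ) (h : a ≤ b + 1) :
    #{T ∈ (Ico a b).powerset | NoConsecutive T} = Nat.fib (b + 2 - a) := by
  rcases lt_or_ge a b with hab | hba
  · have hlt : ∀ T ∈ (Ico (a + 1) b).powerset, ∀ i ∈ T, a < i := fun T hT i hi => by
      have := mem_Ico.1 (mem_powerset.1 hT hi); omega
    have herase : (Ico (a + 1) b).erase (a + 1) = Ico (a + 2) b := by
      ext; simp only [mem_erase, mem_Ico]; omega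
    rw [← insert_Ico_add_one_left_eq_Ico hab, card_filter_powerset_insert _ (by simp),
      filter_congr (fun T hT => noConsecutive_insert_iff_of_forall_lt (hlt T hT)),
      card_filter_powerset_and_notMem, herase, card_noConsecutive_Ico (a + 1) b (by omega),
      card_noConsecutive_Ico (a + 2) b (by omega), show b + 2 - (a + 1) = b - a + 1 by omega,
      show b + 2 - (a + 2) = b - a by omega, show b + 2 - a = b - a + 2 by omega,
      Nat.fib_add_two, add_comm]
  · rw [Ico_eq_empty_of_le hba]
    obtain h | h : b + 2 - a = 1 ∨ b + 2 - a = 2 := by omega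
    all_goals rw [h]; rfl
termination_by b + 1 - a

theorem card_noConsecutive_range_not_zero_and_last (m : ℕ) :
    #{U ∈ (range (m + 1)).powerset | NoConsecutive U ∧ ¬(0 ∈ U ∧ m ∈ U)} =
      Nat.fib (m + 2) + Nat.fib m := by
  have hpos : ∀ U ∈ (Ico 1 (m + 1)).powerset, ∀ i ∈ U, 0 < i := fun U hU i hi => by
    have := mem_Ico.1 (mem_powerset.1 hU hi); omega
  rw [range_eq_Ico, ← insert_Ico_add_one_left_eq_Ico (by omega), zero_add,
    card_filter_powerset_insert (fun U => NoConsecutive U ∧ ¬(0 ∈ U ∧ m ∈ U)) (by simp)]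
  congr 1
  · rw [filter_congr (q := NoConsecutive) fun U hU =>
      and_iff_left (not_and_of_not_left _ fun h => lt_irrefl 0 (hpos U hU 0 h)),
      card_noConsecutive_Ico 1 (m + 1) (by omega)]
    rfl
  · rcases m with _ | m
    · exact card_eq_zero.2 <| filter_false_of_mem fun U _ h =>
        h.2 ⟨mem_insert_self 0 U, mem_insert_self 0 U⟩
    · have herase : ((Ico 1 (m + 1 + 1)).erase (m + 1)).erase 1 = Ico 2 (m + 1) := by
        ext; simp only [mem_erase, mem_Ico]; omega
      rw [filter_congr (q := fun U => (NoConsecutive U ∧ 1 ∉ U) ∧ m + 1 ∉ U)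
          fun U hU => by simp [noConsecutive_insert_iff_of_forall_lt (hpos U hU), and_assoc],
        card_filter_powerset_and_notMem, card_filter_powerset_and_notMem, herase,
        card_noConsecutive_Ico 2 (m + 1) (by omega)]
      rfl

lemma card_filter_map_valEmbedding (n : ℕ) (P : Finset ℕ → Prop) [DecidablePred P] :
    #{T : Finset (Fin n) | P (T.map Fin.valEmbedding)} = #{U ∈ (range n).powerset | P U} := by
  have hval : ∀ U ∈ (range n).powerset,
      ({i : Fin n | i.val ∈ U} : Finset (Fin n)).map Fin.valEmbedding = U := fun U hU => by
    ext x
    simp only [mem_map, mem_filter, mem_univ, true_and, Fin.valEmbedding_apply]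
    exact ⟨fun ⟨i, hi, hix⟩ => hix ▸ hi,
      fun hx => ⟨⟨x, mem_range.1 (mem_powerset.1 hU hx)⟩, hx, rfl⟩⟩
  apply card_nbij' (fun T : Finset (Fin n) => T.map Fin.valEmbedding)
    (fun U => ({i : Fin n | i.val ∈ U} : Finset (Fin n)))
  · intro T hT
    simp_all [subset_iff]
  · intro U hU
    simp_all
  · intro T _
    ext
    simp [Fin.val_inj]
  · intro U hU
    exact hval U (mem_filter.1 hU).1

lemma Fin.noConsecutive_iff_map_valEmbedding {m : ℕ} (T : Finset (Fin (m + 1))) :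
    NoConsecutive T ↔ NoConsecutive (T.map Fin.valEmbedding) ∧
      ¬(0 ∈ T.map Fin.valEmbedding ∧ m ∈ T.map Fin.valEmbedding) := by
  simp only [NoConsecutive, mem_map, Fin.valEmbedding_apply, not_exists, not_and]
  constructor
  · intro h
    refine ⟨?_, ?_⟩
    · rintro _ ⟨i, hi, rfl⟩ j hj hji
      have hj' : j = i + 1 := by
        rw [Fin.ext_iff, Fin.val_add_one, if_neg fun hl => by simp [hl] at hji; omega]
        exact hji
      exact h i hi (hj' ▸ hj)
    · rintro ⟨i, hi, hi0⟩ j hj hjm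
      have hi' : i = j + 1 := by
        rw [Fin.ext_iff, Fin.val_add_one, if_pos (Fin.ext hjm)]
        exact hi0
      exact h j hj (hi' ▸ hi)
  · rintro ⟨h1, h2⟩ i hi hi1
    by_cases hl : i = Fin.last m
    · exact h2 ⟨i + 1, hi1, by rw [Fin.val_add_one, if_pos hl]⟩ i hi (by simp [hl])
    · exact h1 _ ⟨i, hi, rfl⟩ (i + 1) hi1 (by rw [Fin.val_add_one, if_neg hl])

theorem Fin.card_noConsecutive (m : ℕ) :
    #{T : Finset (Fin (m + 1)) | NoConsecutive T} = Nat.fib (m + 2) + Nat.fib m := by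
  rw [filter_congr fun T _ => Fin.noConsecutive_iff_map_valEmbedding T,
    card_filter_map_valEmbedding (m + 1) fun U => NoConsecutive U ∧ ¬(0 ∈ U ∧ m ∈ U),
    card_noConsecutive_range_not_zero_and_last]

section Cyclic

variable {n : ℕ} [NeZero n]

/-- The vertices covered by the edges `s(i, i + 1)`, `i ∈ T`, of the cycle on `Fin n`. -/
def cover (T : Finset (Fin n)) : Finset (Fin n) := T ∪ T.image (· + 1)

lemma add_one_mem_cover {T : Finset (Fin n)} {i : Fin n} :
    i + 1 ∈ cover T ↔ i + 1 ∈ T ∨ i ∈ T := by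
  simp [cover]

lemma mem_cover {T : Finset (Fin n)} {x : Fin n} : x ∈ cover T ↔ x ∈ T ∨ x - 1 ∈ T := by
  simpa using add_one_mem_cover (T := T) (i := x - 1)

lemma mem_cover_iff_exists_mem_sym2 {T : Finset (Fin n)} {x : Fin n} :
    x ∈ cover T ↔ ∃ i ∈ T, x ∈ s(i, i + 1) := by
  simp only [cover, mem_union, mem_image, Sym2.mem_iff]
  grind

open Fin.NatCast in
lemma Fin.finset_eq_of_add_one_mem_iff {T T' : Finset (Fin n)} (v : Fin n)
    (hv : v ∈ T ↔ v ∈ T') (hstep : ∀ i, (i ∈ T ↔ i ∈ T') → (i + 1 ∈ T ↔ i + 1 ∈ T')) :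
    T = T' := by
  have key : ∀ j : ℕ, v + (j : Fin n) ∈ T ↔ v + (j : Fin n) ∈ T' := by
    intro j
    induction j with
    | zero => simpa using hv
    | succ j ih => simpa [add_assoc] using hstep _ ih
  ext x
  simpa using key (x - v).val

lemma NoConsecutive.add_one_mem_iff {T : Finset (Fin n)} (hT : NoConsecutive T) (i : Fin n) :
    i + 1 ∈ T ↔ i + 1 ∈ cover T ∧ i ∉ T := by
  rw [add_one_mem_cover]
  exact ⟨fun h => ⟨Or.inl h, fun hi => hT i hi h⟩, fun ⟨h, hi⟩ => h.resolve_right hi⟩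

lemma NoConsecutive.eq_of_cover_eq {T T' : Finset (Fin n)} (hT : NoConsecutive T)
    (hT' : NoConsecutive T') (h : cover T = cover T') (hne : cover T ≠ univ) : T = T' := by
  obtain ⟨v, hv⟩ : ∃ v, v ∉ cover T := by simpa [eq_univ_iff_forall] using hne
  refine Fin.finset_eq_of_add_one_mem_iff v ?_ fun i hi => ?_
  · have hv' : v ∉ cover T' := h ▸ hv
    simp only [mem_cover, not_or] at hv hv'
    exact iff_of_false hv.1 hv'.1
  · rw [hT.add_one_mem_iff, hT'.add_one_mem_iff, h, hi]

def IsAlternating (T : Finset (Fin n)) : Prop := ∀ i, i + 1 ∈ T ↔ i ∉ T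

lemma noConsecutive_and_cover_eq_univ_iff {T : Finset (Fin n)} :
    NoConsecutive T ∧ cover T = univ ↔ IsAlternating T := by
  refine ⟨fun ⟨hT, hc⟩ i => ?_, fun h => ⟨fun i hi hi1 => (h i).1 hi1 hi, ?_⟩⟩
  · have := hT.add_one_mem_iff i
    rw [hc] at this
    simpa using this
  · refine eq_univ_of_forall fun x => mem_cover.2 ?_
    have := h (x - 1)
    rw [sub_add_cancel] at this
    tauto

lemma IsAlternating.eq {T T' : Finset (Fin n)} (hT : IsAlternating T) (hT' : IsAlternating T')
    (h0 : 0 ∈ T ↔ 0 ∈ T') : T = T' :=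
  Fin.finset_eq_of_add_one_mem_iff 0 h0 fun i hi => by rw [hT, hT', hi]

lemma IsAlternating.compl {T : Finset (Fin n)} (hT : IsAlternating T) : IsAlternating Tᶜ :=
  fun i => by simp only [mem_compl, hT i]

lemma Fin.even_val_add_one_iff (hn : Even n) (i : Fin n) : Even (i + 1).val ↔ ¬Even i.val := by
  obtain ⟨m, rfl⟩ := Nat.exists_eq_add_one_of_ne_zero (NeZero.ne n)
  rw [Fin.val_add_one]
  split_ifs with hl
  · rw [Nat.even_add_one] at hn
    simpa [hl] using hn
  · exact Nat.even_add_one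

def evens (n : ℕ) : Finset (Fin n) := {i | Even i.val}

lemma zero_mem_evens : (0 : Fin n) ∈ evens n := by simp [evens]

lemma isAlternating_evens (hn : Even n) : IsAlternating (evens n) := fun i => by
  simp [evens, Fin.even_val_add_one_iff hn]

lemma isAlternating_iff (hn : Even n) {T : Finset (Fin n)} :
    IsAlternating T ↔ T = evens n ∨ T = (evens n)ᶜ := by
  refine ⟨fun hT => ?_, ?_⟩
  · by_cases hT0 : (0 : Fin n) ∈ T
    · exact Or.inl (hT.eq (isAlternating_evens hn) (iff_of_true hT0 zero_mem_evens))
    · exact Or.inr (hT.eq (isAlternating_evens hn).compl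
        (iff_of_false hT0 (by simpa using zero_mem_evens)))
  · rintro (rfl | rfl)
    exacts [isAlternating_evens hn, (isAlternating_evens hn).compl]

lemma evens_ne_compl : evens n ≠ (evens n)ᶜ := fun h =>
  mem_compl.1 (h ▸ zero_mem_evens) zero_mem_evens

lemma card_filter_noConsecutive_cover_eq_univ (hn : Even n) :
    #{T : Finset (Fin n) | NoConsecutive T ∧ cover T = univ} = 2 := by
  refine Eq.trans (congrArg card ?_) (card_pair evens_ne_compl)
  ext T
  simp [noConsecutive_and_cover_eq_univ_iff, isAlternating_iff hn]

end Cyclic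

namespace SimpleGraph

variable {m : ℕ}

lemma cycleGraph_adj_add_one (i : Fin (m + 2)) : (cycleGraph (m + 2)).Adj i (i + 1) :=
  cycleGraph_adj.2 (Or.inr (add_sub_cancel_left i 1))

lemma exists_eq_mk_add_one_of_mem_edgeSet_cycleGraph {e : Sym2 (Fin (m + 2))}
    (he : e ∈ (cycleGraph (m + 2)).edgeSet) : ∃ i, e = s(i, i + 1) := by
  induction e using Sym2.ind with
  | _ u v =>
  rcases cycleGraph_adj.1 ((mem_edgeSet _).1 he) with h | h
  · obtain rfl := sub_eq_iff_eq_add'.1 h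
    exact ⟨v, Sym2.eq_swap⟩
  · obtain rfl := sub_eq_iff_eq_add'.1 h
    exact ⟨u, rfl⟩

lemma isPMS_cycleGraph_cover {T : Finset (Fin (m + 2))} (hT : NoConsecutive T) :
    IsPMS (cycleGraph (m + 2)) (cover T) := by
  refine ⟨T.image fun i => s(i, i + 1), ⟨?_, ?_⟩, fun x => ?_⟩
  · intro e he
    obtain ⟨i, -, rfl⟩ := mem_image.1 he
    exact cycleGraph_adj_add_one i
  · simp only [mem_image]
    rintro _ ⟨i, hi, rfl⟩ _ ⟨j, hj, rfl⟩ hne x hxi hxj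
    rw [Sym2.mem_iff] at hxi hxj
    rcases hxi with rfl | rfl <;> rcases hxj with h | h
    · exact hne (by rw [h])
    · exact hT j hj (h ▸ hi)
    · exact hT _ hi (h ▸ hj)
    · exact hne (by rw [add_right_cancel h])
  · simp only [mem_cover_iff_exists_mem_sym2, mem_image]
    grind

lemma exists_noConsecutive_cover_eq_of_isPMS_cycleGraph {S : Finset (Fin (m + 2))}
    (h : IsPMS (cycleGraph (m + 2)) S) : ∃ T, NoConsecutive T ∧ cover T = S := by
  obtain ⟨M, ⟨hsub, hdisj⟩, hcov⟩ := h
  choose idx hidx using fun e (he : e ∈ M) =>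
    exists_eq_mk_add_one_of_mem_edgeSet_cycleGraph (hsub he)
  have hmem : ∀ e (he : e ∈ M) x, x ∈ e ↔ x ∈ s(idx e he, idx e he + 1) := fun e he x => by
    conv_lhs => rw [hidx e he]
  refine ⟨M.attach.image fun e => idx e.1 e.2, ?_, ?_⟩
  · simp only [NoConsecutive, mem_image, mem_attach, true_and, Subtype.exists, not_exists]
    rintro _ ⟨e, he, rfl⟩ f hf hfe
    have hef : e = f := by
      by_contra hne
      refine hdisj e he f hf hne (idx e he + 1) ?_ ?_
      · exact (hmem e he _).2 (Sym2.mem_mk_right _ _)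
      · exact (hmem f hf _).2 (hfe ▸ Sym2.mem_mk_left _ _)
    subst hef
    simp at hfe
  · ext x
    rw [mem_cover_iff_exists_mem_sym2, hcov x]
    simp only [mem_image, mem_attach, true_and, Subtype.exists]
    constructor
    · rintro ⟨_, ⟨e, he, rfl⟩, hx⟩
      exact ⟨e, he, (hmem e he x).2 hx⟩
    · rintro ⟨e, he, hx⟩
      exact ⟨_, ⟨e, he, rfl⟩, (hmem e he x).1 hx⟩

open Classical in
lemma card_filter_noConsecutive_cover_ne_univ :
    #{T : Finset (Fin (m + 2)) | NoConsecutive T ∧ ¬cover T = univ} =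
      #{S : Finset (Fin (m + 2)) | IsPMS (cycleGraph (m + 2)) S ∧ S ≠ univ} := by
  refine card_nbij cover (fun T hT => ?_) (fun T hT T' hT' h => ?_) (fun S hS => ?_)
  · simp only [coe_filter, mem_univ, true_and, Set.mem_ofPred_eq] at hT ⊢
    exact ⟨isPMS_cycleGraph_cover hT.1, hT.2⟩
  · simp only [coe_filter, mem_univ, true_and, Set.mem_ofPred_eq] at hT hT'
    exact hT.1.eq_of_cover_eq hT'.1 h hT.2
  · simp only [coe_filter, mem_univ, true_and, Set.mem_ofPred_eq] at hS
    obtain ⟨T, hT, rfl⟩ := exists_noConsecutive_cover_eq_of_isPMS_cycleGraph hS.1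
    exact ⟨T, by simpa using ⟨hT, hS.2⟩, rfl⟩

end SimpleGraph

open Classical in
theorem card_isPMS_cycleGraph_add_one_eq_card_noConsecutive {m : ℕ} (hm : Even m) :
    #{S : Finset (Fin (m + 2)) | IsPMS (SimpleGraph.cycleGraph (m + 2)) S} + 1 =
      #{T : Finset (Fin (m + 2)) | NoConsecutive T} := by
  have hm2 : Even (m + 2) := hm.add even_two
  have huniv : IsPMS (SimpleGraph.cycleGraph (m + 2)) univ := by
    have := noConsecutive_and_cover_eq_univ_iff.2 (isAlternating_evens hm2)
    exact this.2 ▸ SimpleGraph.isPMS_cycleGraph_cover this.1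
  have hpms : #{S : Finset (Fin (m + 2)) | IsPMS (SimpleGraph.cycleGraph (m + 2)) S} =
      #{S : Finset (Fin (m + 2)) | IsPMS (SimpleGraph.cycleGraph (m + 2)) S ∧ S ≠ univ} + 1 := by
    rw [← filter_filter, filter_ne', card_erase_add_one (mem_filter.2 ⟨mem_univ _, huniv⟩)]
  have hsplit := card_filter_add_card_filter_not
    (s := ({T | NoConsecutive T} : Finset (Finset (Fin (m + 2))))) (fun T => cover T = univ)
  rw [filter_filter, filter_filter, card_filter_noConsecutive_cover_eq_univ hm2,
    SimpleGraph.card_filter_noConsecutive_cover_ne_univ] at hsplit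
  omega

open Classical in
theorem card_isPMS_cycleGraph {n : ℕ} (hn : Even n) (hn0 : n ≠ 0) :
    #{S : Finset (Fin n) | IsPMS (SimpleGraph.cycleGraph n) S} =
      Nat.fib (n + 1) + Nat.fib (n - 1) - 1 := by
  obtain ⟨m, rfl⟩ : ∃ m, n = m + 2 := ⟨n - 2, by obtain ⟨j, rfl⟩ := hn; omega⟩
  have hpms :=
    card_isPMS_cycleGraph_add_one_eq_card_noConsecutive (by simpa [Nat.even_add] using hn)
  have hfin : #{T : Finset (Fin (m + 2)) | NoConsecutive T} =
      Nat.fib (m + 2 + 1) + Nat.fib (m + 2 - 1) :=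
    Fin.card_noConsecutive (m + 1)
  omega

open goldenRatio in
lemma goldenRatio_pow_add_goldenConj_pow (m : ℕ) :
    φ ^ (m + 1) + ψ ^ (m + 1) = Nat.fib (m + 2) + Nat.fib m := by
  rw [← Real.goldenRatio_mul_fib_succ_add_fib, ← Real.goldenConj_mul_fib_succ_add_fib,
    Nat.fib_add_two]
  push_cast
  linear_combination (Nat.fib (m + 1) : ℝ) * Real.goldenRatio_add_goldenConj

open goldenRatio in
theorem floor_goldenRatio_pow_of_even {n : ℕ} (hn : Even n) (hn0 : n ≠ 0) :
    ⌊φ ^ n⌋ = ((Nat.fib (n + 1) + Nat.fib (n - 1) - 1 : ℕ) : ℤ) := by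
  have habs : |ψ| < 1 := abs_lt.2 ⟨Real.neg_one_lt_goldenConj, Real.goldenConj_neg.trans one_pos⟩
  have hpos : 0 < ψ ^ n := hn.pow_pos Real.goldenConj_ne_zero
  have hlt : ψ ^ n < 1 := hn.pow_abs ψ ▸ pow_lt_one₀ (abs_nonneg ψ) habs hn0
  obtain ⟨m, rfl⟩ := Nat.exists_eq_add_one_of_ne_zero hn0
  have hfib : 1 ≤ Nat.fib (m + 1 + 1) := Nat.fib_pos.2 (by omega)
  have hsum : φ ^ (m + 1) + ψ ^ (m + 1) = Nat.fib (m + 1 + 1) + Nat.fib m :=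
    goldenRatio_pow_add_goldenConj_pow m
  rw [Int.floor_eq_iff, Nat.add_sub_cancel, Nat.cast_sub (by omega)]
  push_cast
  constructor <;> linarith

open Classical in
theorem pmPoly_eval_one [Fintype V] (G : SimpleGraph V) :
    (pmPoly G univ).eval 1 = #{S : Finset V | IsPMS G S} := by
  rw [pmPoly, Polynomial.eval_finsetSum, powerset_univ, card_filter, Nat.cast_sum]
  refine sum_congr rfl fun S _ => ?_
  split_ifs <;> simp

open goldenRatio in
/-- for all `k ≥ 1`, the number of perfectly matchable sets of `C_{2k}`
equals `⌊φ^{2k}⌋` where `φ` is the golden ratio. -/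
theorem stmt13 (k : ℕ) (hk : 1 ≤ k) :
    (pmPoly (SimpleGraph.cycleGraph (2 * k)) Finset.univ).eval 1 = ⌊φ ^ (2 * k)⌋ := by
  have hn : Even (2 * k) := even_two_mul k
  have hn0 : 2 * k ≠ 0 := by omega
  rw [pmPoly_eval_one, card_isPMS_cycleGraph hn hn0, floor_goldenRatio_pow_of_even hn hn0]
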